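/- arXiv:1808.01705 — 3 statements merged into one kernel-verified Lean document; each statement's English description precedes it below -/
import Mathlib

section
/- Let p be a prime and k ≥ 1. Let G be the group generated by x, y subject to the relations x^p = y^p = 1, [x^{(i)}, y]^p = 1 for 1 ≤ i ≤ k, [[x^{(i)}, y], y] = 1 for 1 ≤ i ≤ k, and [x^{(k+1)}, y] = 1. Then |G| ≤ p^{k+2}. -/
open scoped commutatorElement

/-- Iterated commutator in a group: `[x⁽⁰⁾,y] = y`, `[x⁽ⁱ⁾,y] = [x,[x⁽ⁱ⁻¹⁾,y]]`. -/
def iterComm {G : Type*} [Group G] (x y : G) : ℕ → G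
  | 0 => y
  | n + 1 => ⁅x, iterComm x y n⁆

/-- Relators: x^p, y^p, [x⁽ⁱ⁾,y]^p and [[x⁽ⁱ⁾,y],y] for 1 ≤ i ≤ k, and [x⁽ᵏ⁺¹⁾,y],
where `true` corresponds to x and `false` to y. -/
def sharifiRels (p k : ℕ) : Set (FreeGroup Bool) :=
  { FreeGroup.of true ^ p, FreeGroup.of false ^ p,
    iterComm (FreeGroup.of true) (FreeGroup.of false) (k + 1) } ∪
  { w | ∃ i, 1 ≤ i ∧ i ≤ k ∧
      (w = iterComm (FreeGroup.of true) (FreeGroup.of false) i ^ p ∨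
       w = ⁅iterComm (FreeGroup.of true) (FreeGroup.of false) i, FreeGroup.of false⁆) }

/-!
Write `c i = [x⁽ⁱ⁾, y]`, so `c 0 = y` and conjugation by `x` sends `c i` to `c (i + 1) * c i`.
Since `c (k + 1) = 1` and every `c i` commutes with `y = c 0`, a downward induction through
these conjugation formulas shows that all the `c i` commute with each other. Hence
`N = ⟨c 0, …, c k⟩` is abelian, generated by `k + 1` elements of order dividing `p`, so
`|N| ≤ p ^ (k + 1)`; it is normalized by `x` and contains `y`, so `G = ⟨x⟩ N` and
`|G| ≤ p · p ^ (k + 1)`.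
-/

namespace Subgroup

variable {G : Type*} [Group G]

theorem mem_normalizer_of_pow_eq_one {H : Subgroup G} {g : G} {n : ℕ} (hn : 0 < n)
    (hg : g ^ n = 1) (hH : ∀ h ∈ H, g * h * g⁻¹ ∈ H) : g ∈ normalizer (H : Set G) := by
  have hpow : ∀ m, ∀ h ∈ H, g ^ m * h * (g ^ m)⁻¹ ∈ H := by
    intro m
    induction m with
    | zero => simp
    | succ m ih =>
      intro h hh
      simpa [pow_succ', mul_assoc] using hH _ (ih h hh)
  refine mem_normalizer_iff.2 fun h => ⟨hH h, fun hh => ?_⟩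
  have hinv : g ^ (n - 1) * g = 1 := by rw [← pow_succ, Nat.sub_add_cancel hn, hg]
  simpa [mul_assoc, ← mul_assoc _ g, hinv, ← mul_inv_rev] using hpow (n - 1) _ hh

theorem natCard_closure_range_le_pow {ι : Type*} [Fintype ι] {c : ι → G}
    (hc : Pairwise fun i j => Commute (c i) (c j)) {n : ℕ} (hn : 0 < n)
    (hcn : ∀ i, c i ^ n = 1) : Nat.card (closure (Set.range c)) ≤ n ^ Fintype.card ι := by
  classical
  have hfin : ∀ i, IsOfFinOrder (c i) := fun i => isOfFinOrder_iff_pow_eq_one.2 ⟨n, hn, hcn i⟩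
  have (i : ι) : Finite (zpowers (c i)) := (finite_zpowers.2 (hfin i)).to_subtype
  let f : (∀ i, zpowers (c i)) →* G := noncommPiCoprod fun i j hij => by
    rintro _ _ ⟨a, rfl⟩ ⟨b, rfl⟩
    exact (hc hij).zpow_zpow a b
  have hle : closure (Set.range c) ≤ f.range := by
    rw [closure_le]
    rintro _ ⟨i, rfl⟩
    exact ⟨Pi.mulSingle i ⟨c i, mem_zpowers _⟩, noncommPiCoprod_mulSingle _ _⟩
  have : Finite f.range := Finite.of_surjective _ f.rangeRestrict_surjective
  calc Nat.card (closure (Set.range c))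
      ≤ Nat.card f.range := card_le_of_le hle
    _ ≤ Nat.card (∀ i, zpowers (c i)) := Nat.card_le_card_of_surjective _ f.rangeRestrict_surjective
    _ = ∏ i, orderOf (c i) := by simp [Nat.card_pi, Nat.card_zpowers]
    _ ≤ n ^ Fintype.card ι :=
      Finset.card_univ (α := ι) ▸
        Finset.prod_le_pow_card _ _ _ fun i _ => orderOf_le_of_pow_eq_one hn (hcn i)

open scoped Pointwise in
theorem natCard_le_mul_of_sup_eq_top {H N : Subgroup G} [N.Normal] (h : H ⊔ N = ⊤) :
    Nat.card G ≤ Nat.card H * Nat.card N :=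
  calc Nat.card G = Nat.card ((H : Set G) * (N : Set G)) := by
        rw [← mul_normal, h, coe_top, Nat.card_univ]
    _ ≤ Nat.card H * Nat.card N := Set.natCard_mul_le

end Subgroup

section IterComm

variable {G : Type*} [Group G]

theorem map_iterComm {H : Type*} [Group H] (f : G →* H) (x y : G) (n : ℕ) :
    f (iterComm x y n) = iterComm (f x) (f y) n := by
  induction n with
  | zero => rfl
  | succ n ih => simp only [iterComm, map_commutatorElement, ih]

theorem iterComm_eq_one_of_le {x y : G} {m n : ℕ} (hm : iterComm x y m = 1) (hmn : m ≤ n) :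
    iterComm x y n = 1 := by
  induction n, hmn using Nat.le_induction with
  | base => exact hm
  | succ n _ ih => rw [iterComm, ih, commutatorElement_one_right]

theorem conj_iterComm (x y : G) (n : ℕ) :
    x * iterComm x y n * x⁻¹ = iterComm x y (n + 1) * iterComm x y n := by
  rw [iterComm, commutatorElement_def]
  group

theorem commute_of_commute_mul_mul {a b u v : G} (h : Commute (a * b) (u * v))
    (hau : Commute a u) (hav : Commute a v) (hbv : Commute b v) : Commute b u := by
  have : a * (b * u) * v = a * (u * b) * v :=
    calc a * (b * u) * v = a * b * (u * v) := by group
      _ = u * v * (a * b) := h.eq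
      _ = u * (a * v) * b := by rw [hav.eq]; group
      _ = a * u * (v * b) := by rw [hau.eq]; group
      _ = a * (u * b) * v := by rw [← hbv.eq]; group
  exact mul_left_cancel (mul_right_cancel this)

theorem commute_iterComm {x y : G} {m : ℕ} (hm : iterComm x y m = 1)
    (hy : ∀ i, Commute (iterComm x y i) y) (i j : ℕ) :
    Commute (iterComm x y i) (iterComm x y j) := by
  induction j generalizing i with
  | zero => exact hy i
  | succ j ih =>
    -- Downward induction on `i` from `m`, where the sequence vanishes. Conjugation by `x` turns
    -- `Commute (c i) (c j)` into `Commute (c (i + 1) * c i) (c (j + 1) * c j)`, from which the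
    -- known commutations peel off `Commute (c i) (c (j + 1))`.
    suffices ∀ d i, m ≤ i + d → Commute (iterComm x y i) (iterComm x y (j + 1)) from
      this m i (by omega)
    intro d
    induction d with
    | zero =>
      intro i hi
      rw [iterComm_eq_one_of_le hm (by omega : m ≤ i)]
      exact Commute.one_left _
    | succ d ihd =>
      intro i hi
      have hconj := (Commute.conj_iff x).2 (ih i)
      rw [conj_iterComm, conj_iterComm] at hconj
      exact commute_of_commute_mul_mul hconj (ihd (i + 1) (by omega)) (ih (i + 1)) (ih i)

def iterCommSubgroup (x y : G) (k : ℕ) : Subgroup G :=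
  Subgroup.closure (Set.range fun i : Fin (k + 1) => iterComm x y i)

variable {x y : G} {p k : ℕ}

theorem iterComm_mem_iterCommSubgroup (hk : iterComm x y (k + 1) = 1) {i : ℕ} (hi : i ≤ k + 1) :
    iterComm x y i ∈ iterCommSubgroup x y k := by
  rcases hi.lt_or_eq with hi | rfl
  · exact Subgroup.subset_closure ⟨⟨i, hi⟩, rfl⟩
  · rw [hk]
    exact one_mem _

theorem natCard_iterCommSubgroup_le (hp : 0 < p)
    (hcomm : ∀ i j, Commute (iterComm x y i) (iterComm x y j))
    (hc : ∀ i ≤ k, iterComm x y i ^ p = 1) :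
    Nat.card (iterCommSubgroup x y k) ≤ p ^ (k + 1) := by
  simpa [iterCommSubgroup] using
    Subgroup.natCard_closure_range_le_pow (c := fun i : Fin (k + 1) => iterComm x y i)
      (fun i j _ => hcomm i j) hp fun i => hc i (by omega)

theorem mem_normalizer_iterCommSubgroup (hp : 0 < p) (hx : x ^ p = 1)
    (hk : iterComm x y (k + 1) = 1) :
    x ∈ Subgroup.normalizer (iterCommSubgroup x y k : Set G) := by
  have hconj : iterCommSubgroup x y k ≤
      (iterCommSubgroup x y k).comap (MulAut.conj x).toMonoidHom := by
    rw [iterCommSubgroup, Subgroup.closure_le]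
    rintro _ ⟨i, rfl⟩
    simp only [SetLike.mem_coe, Subgroup.mem_comap, MulEquiv.coe_toMonoidHom, MulAut.conj_apply,
      conj_iterComm]
    exact mul_mem (iterComm_mem_iterCommSubgroup hk (by omega))
      (iterComm_mem_iterCommSubgroup hk (by omega))
  exact Subgroup.mem_normalizer_of_pow_eq_one hp hx fun _ hh => hconj hh

theorem natCard_le_of_iterComm (hp : 0 < p) (hgen : Subgroup.closure {x, y} = ⊤)
    (hx : x ^ p = 1) (hy : y ^ p = 1) (hc : ∀ i, 1 ≤ i → i ≤ k → iterComm x y i ^ p = 1)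
    (hcy : ∀ i, 1 ≤ i → i ≤ k → ⁅iterComm x y i, y⁆ = 1) (hk : iterComm x y (k + 1) = 1) :
    Nat.card G ≤ p ^ (k + 2) := by
  have hcomm : ∀ i j, Commute (iterComm x y i) (iterComm x y j) := by
    refine commute_iterComm hk fun i => ?_
    rcases Nat.eq_zero_or_pos i with rfl | hi
    · exact Commute.refl y
    rcases le_or_gt i k with hik | hik
    · exact commutatorElement_eq_one_iff_commute.1 (hcy i hi hik)
    · rw [iterComm_eq_one_of_le hk hik]
      exact Commute.one_left y
  have hpow (i : ℕ) (hi : i ≤ k) : iterComm x y i ^ p = 1 := by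
    rcases Nat.eq_zero_or_pos i with rfl | h0
    exacts [hy, hc i h0 hi]
  have hyN : y ∈ iterCommSubgroup x y k := iterComm_mem_iterCommSubgroup (i := 0) hk (by omega)
  have : (iterCommSubgroup x y k).Normal := by
    rw [← Subgroup.normalizer_eq_top_iff, eq_top_iff, ← hgen, Subgroup.closure_le]
    exact Set.insert_subset_iff.2 ⟨mem_normalizer_iterCommSubgroup hp hx hk,
      Set.singleton_subset_iff.2 (Subgroup.le_normalizer hyN)⟩
  have hsup : Subgroup.zpowers x ⊔ iterCommSubgroup x y k = ⊤ := by
    rw [eq_top_iff, ← hgen, Subgroup.closure_le]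
    exact Set.insert_subset_iff.2 ⟨Subgroup.mem_sup_left (Subgroup.mem_zpowers x),
      Set.singleton_subset_iff.2 (Subgroup.mem_sup_right hyN)⟩
  calc Nat.card G ≤ Nat.card (Subgroup.zpowers x) * Nat.card (iterCommSubgroup x y k) :=
        Subgroup.natCard_le_mul_of_sup_eq_top hsup
    _ ≤ p * p ^ (k + 1) := by
        rw [Nat.card_zpowers]
        gcongr
        exacts [orderOf_le_of_pow_eq_one hp hx, natCard_iterCommSubgroup_le hp hcomm hpow]
    _ = p ^ (k + 2) := by ring

end IterComm

theorem stmt_7_general (p k : ℕ) (hp : p.Prime) :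
    Nat.card (PresentedGroup (sharifiRels p k)) ≤ p ^ (k + 2) := by
  have hrel {r} (hr : r ∈ sharifiRels p k) : PresentedGroup.mk _ r = 1 :=
    PresentedGroup.one_of_mem hr
  have hmk (n : ℕ) : PresentedGroup.mk (sharifiRels p k)
      (iterComm (FreeGroup.of true) (FreeGroup.of false) n) =
      iterComm (PresentedGroup.of true) (PresentedGroup.of false) n :=
    map_iterComm _ _ _ n
  have hof (b : Bool) : PresentedGroup.mk (sharifiRels p k) (FreeGroup.of b) = .of b := rfl
  refine natCard_le_of_iterComm (x := .of true) (y := .of false) hp.pos ?_ ?_ ?_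
    (fun i h1 h2 => ?_) (fun i h1 h2 => ?_) ?_
  · rw [← PresentedGroup.closure_range_of]
    congr 1
    ext g
    simp [or_comm]
  · simpa [hof] using hrel (Or.inl (Or.inl rfl))
  · simpa [hof] using hrel (Or.inl (Or.inr (Or.inl rfl)))
  · simpa [hmk] using hrel (Or.inr ⟨i, h1, h2, Or.inl rfl⟩)
  · simpa [hmk, hof] using hrel (Or.inr ⟨i, h1, h2, Or.inr rfl⟩)
  · simpa [hmk] using hrel (Or.inl (Or.inr (Or.inr rfl)))

theorem stmt_7 (p k : ℕ) (hp : p.Prime) (hk : 1 ≤ k) :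
    Nat.card (PresentedGroup (sharifiRels p k)) ≤ p ^ (k + 2) :=
  stmt_7_general p k hp
end

section
/- Let p be a prime and k ≥ 1. Let H be the subgroup of U_{k+2}(ℤ/pℤ) generated by X = I + E_{1,2} + ⋯ + E_{k,k+1} and Y = I + E_{k+1,k+2}. Then the (k+2)-nd term of the lower central series of H is trivial, while the iterated commutator [X^{(k)}, Y] is nontrivial. -/
open scoped commutatorElement

/-
Let `U_a` be the group of invertible matrices `g` such that `(g - 1) i j = 0` whenever
`j - i < a`. Since `⁅g, h⁆ - 1 = ((g - 1) (h - 1) - (h - 1) (g - 1)) g⁻¹ h⁻¹` and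
`g⁻¹ h⁻¹` is upper triangular, `⁅U_a, U_b⁆ ≤ U_(a+b)`; hence the `m`-th term of the lower
central series of a subgroup of `U_1` lies in `U_(m+1)`, which is trivial as soon as `m + 1` is
the size of the matrices.

For the iterated commutator write `X = 1 + N` and `Y = 1 + E`. As `E N = 0` and `E² = 0`,
induction gives `[X^(i), Y] = 1 + Nⁱ E`, and with indices starting at `0`,
`Nᵏ E_(k,k+1) = E_(0,k+1) ≠ 0`.
-/

namespace Matrix

variable {R : Type*} {n a b : ℕ}

def IsUpperFrom [Zero R] (a : ℕ) (A : Matrix (Fin n) (Fin n) R) : Prop :=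
  ∀ i j : Fin n, (j : ℕ) < i + a → A i j = 0

section Ring

variable [Ring R] {A B : Matrix (Fin n) (Fin n) R}

theorem IsUpperFrom.mono (hab : a ≤ b) (h : IsUpperFrom b A) : IsUpperFrom a A :=
  fun i j hij => h i j (by omega)

theorem isUpperFrom_zero : IsUpperFrom a (0 : Matrix (Fin n) (Fin n) R) :=
  fun _ _ _ => rfl

theorem isUpperFrom_zero_one : IsUpperFrom 0 (1 : Matrix (Fin n) (Fin n) R) :=
  fun i j hij => one_apply_ne fun h => by subst h; omega

theorem isUpperFrom_single {i j : Fin n} (hij : (i : ℕ) + a ≤ j) (c : R) :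
    IsUpperFrom a (single i j c) :=
  fun _ _ h => single_apply_of_ne _ _ _ _ _ (by rintro ⟨rfl, rfl⟩; omega)

theorem IsUpperFrom.add (hA : IsUpperFrom a A) (hB : IsUpperFrom a B) :
    IsUpperFrom a (A + B) :=
  fun i j h => by simp [hA i j h, hB i j h]

theorem IsUpperFrom.neg (hA : IsUpperFrom a A) : IsUpperFrom a (-A) :=
  fun i j h => by simp [hA i j h]

theorem IsUpperFrom.sub (hA : IsUpperFrom a A) (hB : IsUpperFrom a B) :
    IsUpperFrom a (A - B) :=
  sub_eq_add_neg A B ▸ hA.add hB.neg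

theorem isUpperFrom_sum {ι : Type*} (s : Finset ι) {f : ι → Matrix (Fin n) (Fin n) R}
    (hf : ∀ x ∈ s, IsUpperFrom a (f x)) : IsUpperFrom a (∑ x ∈ s, f x) :=
  fun i j h => by
    rw [Matrix.sum_apply]
    exact Finset.sum_eq_zero fun x hx => hf x hx i j h

theorem IsUpperFrom.mul (hA : IsUpperFrom a A) (hB : IsUpperFrom b B) :
    IsUpperFrom (a + b) (A * B) := by
  intro i j hij
  rw [mul_apply]
  refine Finset.sum_eq_zero fun l _ => ?_
  by_cases hl : (l : ℕ) < i + a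
  · rw [hA i l hl, zero_mul]
  · rw [hB l j (by omega), mul_zero]

theorem IsUpperFrom.pow (hA : IsUpperFrom a A) (m : ℕ) : IsUpperFrom (m * a) (A ^ m) := by
  induction m with
  | zero => simpa using isUpperFrom_zero_one
  | succ m ih => simpa [pow_succ, add_mul] using ih.mul hA

theorem IsUpperFrom.eq_zero (hn : n ≤ a) (hA : IsUpperFrom a A) : A = 0 :=
  ext fun i j => hA i j (by omega)

theorem IsUpperFrom.isNilpotent (hA : IsUpperFrom 1 A) : IsNilpotent A :=
  ⟨n, (hA.pow n).eq_zero (by simp)⟩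

theorem isUpperFrom_zero_iff : IsUpperFrom 0 A ↔ A.IsUpperTriangular :=
  ⟨fun h _ _ hij => h _ _ hij, fun h _ _ hij => h (by simpa using hij)⟩

theorem IsUpperFrom.of_sub_one (hA : IsUpperFrom a (A - 1)) : IsUpperFrom 0 A :=
  sub_add_cancel A 1 ▸ (hA.mono (Nat.zero_le a)).add isUpperFrom_zero_one

end Ring

section CommRing

variable [CommRing R]

theorem IsUpperFrom.units_inv {g : (Matrix (Fin n) (Fin n) R)ˣ}
    (hg : IsUpperFrom 0 (g : Matrix (Fin n) (Fin n) R)) :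
    IsUpperFrom 0 (↑g⁻¹ : Matrix (Fin n) (Fin n) R) := by
  let _ := g.invertible
  rw [coe_units_inv, isUpperFrom_zero_iff] at *
  exact blockTriangular_inv_of_blockTriangular hg

variable (R n) in
def unitsUpperFrom (a : ℕ) : Subgroup (Matrix (Fin n) (Fin n) R)ˣ where
  carrier := {g | IsUpperFrom a ((g : Matrix (Fin n) (Fin n) R) - 1)}
  one_mem' := by simpa using isUpperFrom_zero
  mul_mem' {g h} (hg : IsUpperFrom a (_ - 1)) (hh : IsUpperFrom a (_ - 1)) := by
    have key : ((g * h : (Matrix (Fin n) (Fin n) R)ˣ) : Matrix (Fin n) (Fin n) R) - 1 =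
        g * ((h : Matrix (Fin n) (Fin n) R) - 1) + ((g : Matrix (Fin n) (Fin n) R) - 1) := by
      rw [Units.val_mul]; noncomm_ring
    rw [Set.mem_ofPred_eq, key]
    exact (zero_add a ▸ hg.of_sub_one.mul hh).add hg
  inv_mem' {g} (hg : IsUpperFrom a (_ - 1)) := by
    have key : ((g⁻¹ : (Matrix (Fin n) (Fin n) R)ˣ) : Matrix (Fin n) (Fin n) R) - 1 =
        -((g⁻¹ : (Matrix (Fin n) (Fin n) R)ˣ) * ((g : Matrix (Fin n) (Fin n) R) - 1)) := by
      rw [mul_sub, Units.inv_mul, mul_one, neg_sub]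
    rw [Set.mem_ofPred_eq, key]
    exact (zero_add a ▸ hg.of_sub_one.units_inv.mul hg).neg

theorem mem_unitsUpperFrom {g : (Matrix (Fin n) (Fin n) R)ˣ} :
    g ∈ unitsUpperFrom R n a ↔ IsUpperFrom a ((g : Matrix (Fin n) (Fin n) R) - 1) :=
  Iff.rfl

theorem IsUpperFrom.mem_unitsUpperFrom {A : Matrix (Fin n) (Fin n) R}
    {u : (Matrix (Fin n) (Fin n) R)ˣ} (hA : IsUpperFrom a A)
    (hu : (u : Matrix (Fin n) (Fin n) R) = 1 + A) : u ∈ unitsUpperFrom R n a := by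
  rwa [Matrix.mem_unitsUpperFrom, hu, add_sub_cancel_left]

theorem commutatorElement_mem_unitsUpperFrom {g h : (Matrix (Fin n) (Fin n) R)ˣ}
    (hg : g ∈ unitsUpperFrom R n a) (hh : h ∈ unitsUpperFrom R n b) :
    ⁅g, h⁆ ∈ unitsUpperFrom R n (a + b) := by
  have hgh : g⁻¹ * h⁻¹ ∈ unitsUpperFrom R n 0 :=
    mul_mem (inv_mem (hg.mono (Nat.zero_le a))) (inv_mem (hh.mono (Nat.zero_le b)))
  rw [mem_unitsUpperFrom] at *
  set G := (g : Matrix (Fin n) (Fin n) R)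
  set H := (h : Matrix (Fin n) (Fin n) R)
  set K := ((g⁻¹ * h⁻¹ : (Matrix (Fin n) (Fin n) R)ˣ) : Matrix (Fin n) (Fin n) R) with hK
  have key : ((⁅g, h⁆ : (Matrix (Fin n) (Fin n) R)ˣ) : Matrix (Fin n) (Fin n) R) - 1 =
      ((G - 1) * (H - 1) - (H - 1) * (G - 1)) * K := by
    have hHG : H * G * K = 1 := by
      rw [hK, Units.val_mul, mul_assoc, ← mul_assoc G, Units.mul_inv, one_mul, Units.mul_inv]
    have hcomm : (G - 1) * (H - 1) - (H - 1) * (G - 1) = G * H - H * G := by noncomm_ring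
    rw [hcomm, sub_mul, hHG, hK, commutatorElement_def, Units.val_mul, Units.val_mul,
      Units.val_mul, Units.val_mul, mul_assoc (G * H)]
  rw [key]
  exact ((hg.mul hh).sub (add_comm a b ▸ hh.mul hg)).mul hgh.of_sub_one

theorem unitsUpperFrom_eq_bot (ha : n ≤ a) : unitsUpperFrom R n a = ⊥ :=
  eq_bot_iff.2 fun _ hg => Units.ext <| sub_eq_zero.1 <| IsUpperFrom.eq_zero ha hg

theorem lowerCentralSeries_le_unitsUpperFrom {H : Subgroup (Matrix (Fin n) (Fin n) R)ˣ}
    (hH : H ≤ unitsUpperFrom R n 1) (m : ℕ) :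
    H.lowerCentralSeries m ≤ unitsUpperFrom R n (m + 1) := by
  induction m with
  | zero => exact hH
  | succ m ih =>
    exact Subgroup.commutator_le.2 fun g hg h hh =>
      commutatorElement_mem_unitsUpperFrom (ih hg) (hH hh)

theorem lowerCentralSeries_eq_bot_of_le_unitsUpperFrom
    {H : Subgroup (Matrix (Fin n) (Fin n) R)ˣ} (hH : H ≤ unitsUpperFrom R n 1) {m : ℕ}
    (hm : n ≤ m + 1) : H.lowerCentralSeries m = ⊥ :=
  eq_bot_iff.2 <| unitsUpperFrom_eq_bot (R := R) hm ▸ lowerCentralSeries_le_unitsUpperFrom hH m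

end CommRing

end Matrix

section IteratedCommutator

variable {M : Type*} [Ring M] {x y v : Mˣ} {N E F : M}

theorem val_commutatorElement_eq_one_add_mul (hx : (x : M) = 1 + N) (hv : (v : M) = 1 + F)
    (hFN : F * N = 0) (hFF : F * F = 0) (hNFF : N * F * F = 0) :
    ((⁅x, v⁆ : Mˣ) : M) = 1 + N * F := by
  have hv_inv : ((v⁻¹ : Mˣ) : M) = 1 - F :=
    Units.inv_eq_of_mul_eq_one_right <| by rw [hv, mul_sub, mul_one, add_mul, one_mul, hFF]; abel
  have hF_inv : F * ((x⁻¹ : Mˣ) : M) = F := by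
    calc F * ((x⁻¹ : Mˣ) : M) = F * x * ((x⁻¹ : Mˣ) : M) := by
          rw [hx, mul_add, hFN, mul_one, add_zero]
      _ = F := by rw [mul_assoc, Units.mul_inv, mul_one]
  rw [commutatorElement_def, Units.val_mul, Units.val_mul, Units.val_mul, hv_inv, hv,
    mul_add, mul_one, add_mul, Units.mul_inv, mul_assoc (x : M) F, hF_inv, hx]
  calc (1 + (1 + N) * F) * (1 - F) = 1 + N * F - (F * F + N * F * F) := by noncomm_ring
    _ = 1 + N * F := by rw [hFF, hNFF, add_zero, sub_zero]

theorem val_iterComm_eq_one_add_pow_mul (hx : (x : M) = 1 + N) (hy : (y : M) = 1 + E)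
    (hEN : E * N = 0) (hEE : E * E = 0) (i : ℕ) :
    ((iterComm x y i : Mˣ) : M) = 1 + N ^ i * E := by
  have hENE : ∀ j : ℕ, E * N ^ j * E = 0
    | 0 => by rw [pow_zero, mul_one, hEE]
    | j + 1 => by rw [pow_succ', ← mul_assoc, hEN, zero_mul, zero_mul]
  induction i with
  | zero => rw [pow_zero, one_mul]; exact hy
  | succ i ih =>
    rw [iterComm.eq_2, val_commutatorElement_eq_one_add_mul hx ih, pow_succ', mul_assoc]
    · rw [mul_assoc, hEN, mul_zero]
    · rw [mul_assoc, ← mul_assoc E, hENE, mul_zero]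
    · rw [mul_assoc, mul_assoc, ← mul_assoc E, hENE, mul_zero, mul_zero]

end IteratedCommutator

section ShiftMatrix

open Matrix

variable (R : Type*) [Ring R] (k : ℕ)

def shiftMatrix : Matrix (Fin (k + 2)) (Fin (k + 2)) R :=
  ∑ j : Fin k,
    single (j.castLE (Nat.le_add_right k 2)) (j.succ.castLE (Nat.add_le_add_right k.le_succ 1)) 1

variable {R k}

theorem isUpperFrom_shiftMatrix : IsUpperFrom 1 (shiftMatrix R k) :=
  isUpperFrom_sum _ fun _ _ => isUpperFrom_single (by simp) 1

theorem single_last_mul_shiftMatrix (i : Fin (k + 2)) (r : R) :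
    single i (Fin.last (k + 1)) r * shiftMatrix R k = 0 := by
  rw [shiftMatrix, Finset.mul_sum]
  refine Finset.sum_eq_zero fun j _ => single_mul_single_of_ne _ _ _ _ ?_ _
  simp [Fin.ext_iff]
  omega

theorem shiftMatrix_mul_single {a b : Fin (k + 2)} (hab : (a : ℕ) + 1 = b) (hb : (b : ℕ) ≤ k)
    (c : Fin (k + 2)) (r : R) : shiftMatrix R k * single b c r = single a c r := by
  obtain ⟨b, _⟩ := b
  subst hab
  rw [shiftMatrix, Finset.sum_mul, Finset.sum_eq_single ⟨a, hb⟩]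
  · exact (single_mul_single_same (1 : R) _ _ c r).trans (by rw [one_mul]; rfl)
  · intro l _ hl
    refine single_mul_single_of_ne _ _ _ _ ?_ _
    simp only [ne_eq, Fin.ext_iff, Fin.val_castLE, Fin.val_succ] at hl ⊢
    omega
  · simp

theorem shiftMatrix_pow_mul_single {a b : Fin (k + 2)} (i : ℕ) (hab : (a : ℕ) + i = b)
    (hb : (b : ℕ) ≤ k) (c : Fin (k + 2)) (r : R) :
    shiftMatrix R k ^ i * single b c r = single a c r := by
  induction i generalizing b with
  | zero => rw [pow_zero, one_mul, Fin.ext hab.symm]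
  | succ i ih =>
    rw [pow_succ, mul_assoc, shiftMatrix_mul_single (a := ⟨a + i, by omega⟩) (by simp; omega) hb,
      ih rfl (by simp; omega)]

end ShiftMatrix

theorem stmt_9 (p k : ℕ) (hp : p.Prime) :
    ∃ X Y : (Matrix (Fin (k + 2)) (Fin (k + 2)) (ZMod p))ˣ,
      (X : Matrix (Fin (k + 2)) (Fin (k + 2)) (ZMod p)) =
        1 + ∑ j : Fin k,
          Matrix.single (j.castLE (by omega)) (j.succ.castLE (by omega)) (1 : ZMod p) ∧
      (Y : Matrix (Fin (k + 2)) (Fin (k + 2)) (ZMod p)) =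
        1 + Matrix.single (⟨k, by omega⟩ : Fin (k + 2)) ⟨k + 1, by omega⟩ (1 : ZMod p) ∧
      lowerCentralSeries (Subgroup.closure {X, Y} :
        Subgroup (Matrix (Fin (k + 2)) (Fin (k + 2)) (ZMod p))ˣ) (k + 1) = ⊥ ∧
      iterComm X Y k ≠ 1 := by
  have : Fact p.Prime := ⟨hp⟩
  have hN := isUpperFrom_shiftMatrix (R := ZMod p) (k := k)
  have hE := Matrix.isUpperFrom_single (a := 1) (i := ⟨k, by omega⟩) (j := Fin.last (k + 1))
    (by simp) (1 : ZMod p)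
  set X := hN.isNilpotent.isUnit_one_add.unit
  set Y := hE.isNilpotent.isUnit_one_add.unit
  refine ⟨X, Y, rfl, rfl, ?_, fun h => ?_⟩
  · refine Matrix.lowerCentralSeries_eq_bot_of_le_unitsUpperFrom ?_ le_rfl
    rw [Subgroup.closure_le, Set.insert_subset_iff, Set.singleton_subset_iff]
    exact ⟨hN.mem_unitsUpperFrom rfl, hE.mem_unitsUpperFrom rfl⟩
  · have hcomm := val_iterComm_eq_one_add_pow_mul (x := X) (y := Y) rfl rfl
      (single_last_mul_shiftMatrix _ _)
      (Matrix.single_mul_single_of_ne _ _ _ _ (by simp [Fin.ext_iff]) _) k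
    rw [h, Units.val_one, left_eq_add, shiftMatrix_pow_mul_single (a := 0) k (by simp) le_rfl]
      at hcomm
    simpa using congrFun₂ hcomm 0 (Fin.last (k + 1))
end

section
/- Let H be any group generated by σ_a, σ_b, let γ, δ ∈ [H,H], and set σ = σ_a γ, τ = σ_b δ. Then for every i ≥ 0, [σ^{(i)}, τ] ≡ [σ_a^{(i)}, σ_b] modulo H_{i+2}, where H_j is the lower central series of H. -/
open scoped commutatorElement

lemma lcs_succ' {H : Type*} [Group H] (n : ℕ) :
    (⊤ : Subgroup H).lowerCentralSeries (n + 1) = ⁅(⊤ : Subgroup H).lowerCentralSeries n, ⊤⁆ := rfl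

/-- Three subgroups lemma modulo a normal subgroup. -/
lemma three_sub {G : Type*} [Group G] {H₁ H₂ H₃ N : Subgroup G} [N.Normal]
    (h1 : ⁅⁅H₂, H₃⁆, H₁⁆ ≤ N) (h2 : ⁅⁅H₃, H₁⁆, H₂⁆ ≤ N) : ⁅⁅H₁, H₂⁆, H₃⁆ ≤ N := by
  rw [← QuotientGroup.ker_mk' N, ← Subgroup.map_eq_bot_iff, Subgroup.map_commutator,
    Subgroup.map_commutator] at h1 h2 ⊢
  exact Subgroup.commutator_commutator_eq_bot_of_rotate h1 h2

lemma lcs_comm {H : Type*} [Group H] :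
    ∀ n m : ℕ, ⁅(⊤ : Subgroup H).lowerCentralSeries m, (⊤ : Subgroup H).lowerCentralSeries n⁆ ≤
      (⊤ : Subgroup H).lowerCentralSeries (m + n + 1) := by
  intro n
  induction n with
  | zero =>
    intro m
    rw [Subgroup.lowerCentralSeries_zero, ← lcs_succ']
  | succ n ih =>
    intro m
    rw [lcs_succ' n, Subgroup.commutator_comm ((⊤ : Subgroup H).lowerCentralSeries m)]
    apply three_sub
    · calc ⁅⁅(⊤ : Subgroup H), (⊤ : Subgroup H).lowerCentralSeries m⁆, (⊤ : Subgroup H).lowerCentralSeries n⁆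
          = ⁅⁅(⊤ : Subgroup H).lowerCentralSeries m, ⊤⁆, (⊤ : Subgroup H).lowerCentralSeries n⁆ := by
            rw [Subgroup.commutator_comm (⊤ : Subgroup H) ((⊤ : Subgroup H).lowerCentralSeries m)]
        _ = ⁅(⊤ : Subgroup H).lowerCentralSeries (m + 1), (⊤ : Subgroup H).lowerCentralSeries n⁆ := by
            rw [lcs_succ']
        _ ≤ (⊤ : Subgroup H).lowerCentralSeries (m + 1 + n + 1) := ih (m + 1)
        _ = (⊤ : Subgroup H).lowerCentralSeries (m + (n + 1) + 1) := by ring_nf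
    · calc ⁅⁅(⊤ : Subgroup H).lowerCentralSeries m, (⊤ : Subgroup H).lowerCentralSeries n⁆, (⊤ : Subgroup H)⁆
          ≤ ⁅(⊤ : Subgroup H).lowerCentralSeries (m + n + 1), ⊤⁆ :=
            Subgroup.commutator_mono (ih m) le_rfl
        _ = (⊤ : Subgroup H).lowerCentralSeries (m + n + 1 + 1) := (lcs_succ' _).symm
        _ = (⊤ : Subgroup H).lowerCentralSeries (m + (n + 1) + 1) := by ring_nf

lemma iterComm_mem {H : Type*} [Group H] (x y : H) :
    ∀ n, iterComm x y n ∈ (⊤ : Subgroup H).lowerCentralSeries n := by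
  intro n
  induction n with
  | zero => exact Subgroup.mem_top _
  | succ n ih =>
    rw [lcs_succ', Subgroup.commutator_comm]
    exact Subgroup.commutator_mem_commutator (Subgroup.mem_top x) ih

lemma key_comm {Q : Type*} [Group Q] (A G U V : Q) (h1 : G * U = U * G)
    (h2 : A * (U⁻¹ * V) = (U⁻¹ * V) * A) : ⁅A * G, U⁆ = ⁅A, V⁆ := by
  have e1 : ⁅A * G, U⁆ = A * U * A⁻¹ * U⁻¹ := by
    have hGU : G * U * G⁻¹ = U := by rw [h1]; group
    calc ⁅A * G, U⁆ = A * (G * U * G⁻¹) * A⁻¹ * U⁻¹ := by group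
      _ = A * U * A⁻¹ * U⁻¹ := by rw [hGU]
  have h2c : A * (U⁻¹ * V) * A⁻¹ = U⁻¹ * V := by rw [h2]; group
  have e2 : ⁅A, V⁆ = A * U * A⁻¹ * U⁻¹ := by
    calc ⁅A, V⁆ = (A * U * A⁻¹) * (A * (U⁻¹ * V) * A⁻¹) * V⁻¹ := by group
      _ = (A * U * A⁻¹) * (U⁻¹ * V) * V⁻¹ := by rw [h2c]
      _ = A * U * A⁻¹ * U⁻¹ := by group
  rw [e1, e2]

theorem stmt_18 (H : Type*) [Group H] (σa σb : H)
    (hgen : Subgroup.closure {σa, σb} = ⊤)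
    (γ δ : H) (hγ : γ ∈ commutator H) (hδ : δ ∈ commutator H) :
    ∀ i : ℕ,
      (iterComm (σa * γ) (σb * δ) i)⁻¹ * iterComm σa σb i ∈
        (⊤ : Subgroup H).lowerCentralSeries (i + 1) := by
  intro i
  induction i with
  | zero =>
    show (σb * δ)⁻¹ * σb ∈ (⊤ : Subgroup H).lowerCentralSeries 1
    have h : (σb * δ)⁻¹ * σb = δ⁻¹ := by group
    rw [Subgroup.top_lowerCentralSeries_one, h]
    exact inv_mem hδ
  | succ i ih =>
    have hγ1 : γ ∈ (⊤ : Subgroup H).lowerCentralSeries 1 := by rwa [Subgroup.top_lowerCentralSeries_one]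
    have hmem1 : ⁅γ, iterComm (σa * γ) (σb * δ) i⁆ ∈ (⊤ : Subgroup H).lowerCentralSeries (i + 1 + 1) := by
      have h := lcs_comm (H := H) i 1
        (Subgroup.commutator_mem_commutator hγ1 (iterComm_mem (σa * γ) (σb * δ) i))
      have e : 1 + i + 1 = i + 1 + 1 := by ring
      rwa [e] at h
    have hmem2 : ⁅σa, (iterComm (σa * γ) (σb * δ) i)⁻¹ * iterComm σa σb i⁆ ∈
        (⊤ : Subgroup H).lowerCentralSeries (i + 1 + 1) := by
      have h := lcs_comm (H := H) (i + 1) 0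
        (Subgroup.commutator_mem_commutator (Subgroup.mem_top σa) ih)
      simpa using h
    set N := (⊤ : Subgroup H).lowerCentralSeries (i + 1 + 1)
    let mk : H →* H ⧸ N := QuotientGroup.mk' N
    have c1 : mk γ * mk (iterComm (σa * γ) (σb * δ) i) =
        mk (iterComm (σa * γ) (σb * δ) i) * mk γ := by
      have h : mk ⁅γ, iterComm (σa * γ) (σb * δ) i⁆ = 1 :=
        (QuotientGroup.eq_one_iff _).mpr hmem1
      rw [map_commutatorElement] at h
      exact commutatorElement_eq_one_iff_mul_comm.mp h
    have c2 : mk σa * ((mk (iterComm (σa * γ) (σb * δ) i))⁻¹ * mk (iterComm σa σb i)) =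
        ((mk (iterComm (σa * γ) (σb * δ) i))⁻¹ * mk (iterComm σa σb i)) * mk σa := by
      have h : mk ⁅σa, (iterComm (σa * γ) (σb * δ) i)⁻¹ * iterComm σa σb i⁆ = 1 :=
        (QuotientGroup.eq_one_iff _).mpr hmem2
      rw [map_commutatorElement, map_mul, map_inv] at h
      exact commutatorElement_eq_one_iff_mul_comm.mp h
    have key : mk (iterComm (σa * γ) (σb * δ) (i + 1)) = mk (iterComm σa σb (i + 1)) := by
      show mk ⁅σa * γ, iterComm (σa * γ) (σb * δ) i⁆ = mk ⁅σa, iterComm σa σb i⁆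
      rw [map_commutatorElement, map_commutatorElement, map_mul]
      exact key_comm _ _ _ _ c1 c2
    have : mk ((iterComm (σa * γ) (σb * δ) (i + 1))⁻¹ * iterComm σa σb (i + 1)) = 1 := by
      rw [map_mul, map_inv, key, inv_mul_cancel]
    exact (QuotientGroup.eq_one_iff _).mp this
end
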